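/- Let a and s be configurations such that (a,s) has finite queue lengths, and set d = D(a,s). Then for all integers s₀ < t, min_{ℓ ∈ [s₀,t]} ( a[s₀,ℓ−1] + s[ℓ,t−1] ) = min_{ℓ ∈ [s₀,t]} ( a[s₀,ℓ−1] + d[ℓ,t−1] ), where sums over empty index ranges equal 0. -/

import Mathlib

open scoped BigOperators

/-- A particle configuration on `ℤ`: a `{0,1}`-valued function. -/
abbrev Config := ℤ → ℤ

/-- `x` takes only the values `0` and `1`. -/
def IsConfig (x : Config) : Prop := ∀ i, x i = 0 ∨ x i = 1

/-- `x[i,j] = ∑_{k=i}^j x(k)` (zero if `j < i`). -/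
noncomputable def cnt (x : Config) (i j : ℤ) : ℤ := ∑ k ∈ Finset.Icc i j, x k

/-- `(a,s)` has finite queue lengths. -/
def FinQ (a s : Config) : Prop :=
  ∀ i : ℤ, BddAbove {v : ℤ | ∃ j ≤ i, v = cnt a j i - cnt s j i}

/-- The queue length `Q_i(a,s) = sup_{j ≤ i} max(a[j,i] - s[j,i], 0)`. -/
noncomputable def queue (a s : Config) (i : ℤ) : ℤ :=
  sSup {q : ℤ | ∃ j ≤ i, q = max (cnt a j i - cnt s j i) 0}

/-- The departure configuration `D(a,s)`. -/
noncomputable def dep (a s : Config) : Config := fun i =>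
  if s i = 1 ∧ (0 < queue a s (i - 1) ∨ a i = 1) then 1 else 0

/-- The unused-service configuration `U(a,s)`. -/
noncomputable def unusedSrv (a s : Config) : Config := fun i =>
  if s i = 1 ∧ queue a s (i - 1) = 0 ∧ a i = 0 then 1 else 0

/-- `R(a,s)(i) = a(i) + U(a,s)(i)`. -/
noncomputable def Rmap (a s : Config) : Config := fun i => a i + unusedSrv a s i

/-- Truncation: `x_{n,0}(i) = x(i)` for `i ≥ n`, `0` otherwise. -/
def trunc (x : Config) (n : ℤ) : Config := fun i => if n ≤ i then x i else 0

/-- Left-peeling tandem queue: `Dtandem x [s₁,…,s_k] = D(…D(D(x,s₁),s₂)…,s_k)`. -/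
noncomputable def Dtandem : Config → List Config → Config
  | x, [] => x
  | x, s :: rest => Dtandem (dep x s) rest

/-- `DtandemList [x₁,…,xₙ] = Dⁿ(x₁,…,xₙ)`. -/
noncomputable def DtandemList : List Config → Config
  | [] => fun _ => 0
  | x :: rest => Dtandem x rest

/-- `DtandemN x = Dⁿ(x 0, …, x (n-1))`. -/
noncomputable def DtandemN {n : ℕ} (x : Fin n → Config) : Config :=
  DtandemList (List.ofFn x)

/-- Every pair appearing as (arrivals, services) in the recursive definition of the
tandem departure map has finite queue lengths. -/
def TandemFinQ : List Config → Prop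
  | [] => True
  | [_] => True
  | x :: s :: rest => FinQ x s ∧ TandemFinQ (dep x s :: rest)
  termination_by l => l.length

/-!
Departures telescope: `d(i) = a(i) + Q_{i-1} - Q_i`, so the `ℓ`-th term on the right is
`a[s₀,t-1] + Q_{ℓ-1} - Q_{t-1}`. Since `d ≤ s` the right-hand minimum is at most the left one.
Conversely, the queue at time `t - 1` was either empty at some time in `[ℓ-1, t-1]` or has been
busy since before `ℓ`; either way there is `j ∈ [ℓ,t]` with
`Q_{t-1} - (a[j,t-1] - s[j,t-1]) ≤ Q_{ℓ-1}`, and then the `j`-th term on the left is at most the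
`ℓ`-th term on the right.
-/

section Counting

variable (x : Config)

lemma cnt_of_lt {i j : ℤ} (h : j < i) : cnt x i j = 0 := by
  rw [cnt, Finset.Icc_eq_empty (by omega), Finset.sum_empty]

lemma cnt_self (i : ℤ) : cnt x i i = x i := by
  rw [cnt, Finset.Icc_self, Finset.sum_singleton]

lemma cnt_split {i k j : ℤ} (hik : i ≤ k) (hkj : k ≤ j + 1) :
    cnt x i j = cnt x i (k - 1) + cnt x k j := by
  rw [cnt, cnt, cnt, ← Finset.sum_union]
  · congr 1
    ext m
    simp only [Finset.mem_union, Finset.mem_Icc]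
    omega
  · rw [Finset.disjoint_left]
    simp only [Finset.mem_Icc]
    omega

lemma cnt_eq_cnt_sub_one_add {i j : ℤ} (h : i ≤ j) : cnt x i j = cnt x i (j - 1) + x j := by
  rw [cnt_split x h (by omega), cnt_self]

end Counting

lemma cnt_mono {x y : Config} (h : ∀ i, x i ≤ y i) (i j : ℤ) : cnt x i j ≤ cnt y i j :=
  Finset.sum_le_sum fun k _ => h k

section Queue

variable {a s : Config}

lemma bddAbove_queue_set (hfq : FinQ a s) (i : ℤ) :
    BddAbove {q : ℤ | ∃ j ≤ i, q = max (cnt a j i - cnt s j i) 0} := by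
  obtain ⟨M, hM⟩ := hfq i
  refine ⟨max M 0, ?_⟩
  rintro q ⟨j, hj, rfl⟩
  exact max_le_max_right 0 (hM ⟨j, hj, rfl⟩)

lemma exists_queue_eq (hfq : FinQ a s) (i : ℤ) :
    ∃ j ≤ i, queue a s i = max (cnt a j i - cnt s j i) 0 :=
  Int.csSup_mem (s := {q | ∃ j ≤ i, q = max (cnt a j i - cnt s j i) 0}) ⟨_, i, le_rfl, rfl⟩
    (bddAbove_queue_set hfq i)

lemma le_queue (hfq : FinQ a s) {i j : ℤ} (hj : j ≤ i) :
    max (cnt a j i - cnt s j i) 0 ≤ queue a s i :=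
  le_csSup (bddAbove_queue_set hfq i) ⟨j, hj, rfl⟩

lemma queue_nonneg (hfq : FinQ a s) (i : ℤ) : 0 ≤ queue a s i :=
  (le_max_right _ _).trans (le_queue hfq le_rfl)

lemma sub_le_queue (hfq : FinQ a s) {i j : ℤ} (hj : j ≤ i) :
    cnt a j i - cnt s j i ≤ queue a s i :=
  (le_max_left _ _).trans (le_queue hfq hj)

lemma cnt_sub_cnt_eq {j i : ℤ} (hj : j ≤ i) :
    cnt a j i - cnt s j i = cnt a j (i - 1) - cnt s j (i - 1) + (a i - s i) := by
  rw [cnt_eq_cnt_sub_one_add a hj, cnt_eq_cnt_sub_one_add s hj]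
  ring

lemma queue_eq_max (hfq : FinQ a s) (i : ℤ) :
    queue a s i = max (queue a s (i - 1) + a i - s i) 0 := by
  have hQ := queue_nonneg hfq (i - 1)
  have hii : cnt a i i - cnt s i i = a i - s i := by rw [cnt_self, cnt_self]
  apply le_antisymm
  · obtain ⟨j, hj, hQj⟩ := exists_queue_eq hfq i
    rcases hj.lt_or_eq with hj | rfl
    · have := sub_le_queue hfq (show j ≤ i - 1 by omega)
      have := cnt_sub_cnt_eq (a := a) (s := s) hj.le
      omega
    · omega
  · obtain ⟨j, hj, hQj⟩ := exists_queue_eq hfq (i - 1)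
    -- `max(a[j,i-1] - s[j,i-1], 0) + a i - s i` is `a[j,i] - s[j,i]` or `a[i,i] - s[i,i]`.
    have := sub_le_queue hfq (show j ≤ i by omega)
    have := sub_le_queue hfq (le_refl i)
    have := queue_nonneg hfq i
    have := cnt_sub_cnt_eq (a := a) (s := s) (show j ≤ i by omega)
    omega

lemma dep_eq_add_queue_sub_queue (ha : IsConfig a) (hs : IsConfig s) (hfq : FinQ a s) (i : ℤ) :
    dep a s i = a i + queue a s (i - 1) - queue a s i := by
  have := queue_eq_max hfq i
  have := queue_nonneg hfq (i - 1)
  have := ha i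
  have := hs i
  unfold dep
  split_ifs <;> omega

lemma cnt_dep (ha : IsConfig a) (hs : IsConfig s) (hfq : FinQ a s) {l m : ℤ} (h : l - 1 ≤ m) :
    cnt (dep a s) l m = cnt a l m + queue a s (l - 1) - queue a s m := by
  induction m, h using Int.leInduction with
  | base => rw [cnt_of_lt _ (by omega), cnt_of_lt _ (by omega)]; ring
  | succ m hm ih =>
    rw [cnt_eq_cnt_sub_one_add _ (by omega), cnt_eq_cnt_sub_one_add a (by omega),
      add_sub_cancel_right, ih, dep_eq_add_queue_sub_queue ha hs hfq, add_sub_cancel_right]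
    ring

lemma dep_le (hs : IsConfig s) (i : ℤ) : dep a s i ≤ s i := by
  have := hs i
  unfold dep
  split_ifs <;> omega

lemma exists_queue_sub_le (hfq : FinQ a s) {l t : ℤ} (hlt : l ≤ t) :
    ∃ j ∈ Finset.Icc l t, queue a s (t - 1) - (cnt a j (t - 1) - cnt s j (t - 1))
      ≤ queue a s (l - 1) := by
  have hQl := queue_nonneg hfq (l - 1)
  obtain ⟨j, hj, hQj⟩ := exists_queue_eq hfq (t - 1)
  rcases le_or_gt (cnt a j (t - 1) - cnt s j (t - 1)) 0 with hneg | hpos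
  · refine ⟨t, Finset.mem_Icc.2 ⟨hlt, le_rfl⟩, ?_⟩
    rw [cnt_of_lt a (by omega), cnt_of_lt s (by omega)]
    omega
  rcases le_or_gt l j with hlj | hjl
  · exact ⟨j, Finset.mem_Icc.2 ⟨hlj, by omega⟩, by omega⟩
  · refine ⟨l, Finset.mem_Icc.2 ⟨le_rfl, hlt⟩, ?_⟩
    have := sub_le_queue hfq (show j ≤ l - 1 by omega)
    have := cnt_split a hjl.le (show l ≤ t - 1 + 1 by omega)
    have := cnt_split s hjl.le (show l ≤ t - 1 + 1 by omega)
    omega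

end Queue

/-- With `d = D(a,s)`, for all `s₀ < t`,
`min_{ℓ ∈ [s₀,t]} (a[s₀,ℓ−1] + s[ℓ,t−1]) = min_{ℓ ∈ [s₀,t]} (a[s₀,ℓ−1] + d[ℓ,t−1])`. -/
theorem stmt10 (a s : Config) (ha : IsConfig a) (hs : IsConfig s) (hfq : FinQ a s) :
    ∀ s₀ t : ℤ, ∀ hst : s₀ < t,
      (Finset.Icc s₀ t).inf' (Finset.nonempty_Icc.mpr hst.le)
          (fun l => cnt a s₀ (l - 1) + cnt s l (t - 1))
        = (Finset.Icc s₀ t).inf' (Finset.nonempty_Icc.mpr hst.le)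
          (fun l => cnt a s₀ (l - 1) + cnt (dep a s) l (t - 1)) := by
  intro s₀ t hst
  apply le_antisymm
  · refine Finset.le_inf' _ _ fun l hl => ?_
    rw [Finset.mem_Icc] at hl
    obtain ⟨j, hj, hjQ⟩ := exists_queue_sub_le hfq hl.2
    rw [Finset.mem_Icc] at hj
    refine (Finset.inf'_le _ (Finset.mem_Icc.2 ⟨hl.1.trans hj.1, hj.2⟩)).trans ?_
    have := cnt_dep ha hs hfq (show l - 1 ≤ t - 1 by omega)
    have := cnt_split a hl.1 (show l ≤ t - 1 + 1 by omega)
    have := cnt_split a (hl.1.trans hj.1) (show j ≤ t - 1 + 1 by omega)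
    omega
  · refine Finset.le_inf' _ _ fun l hl => (Finset.inf'_le _ hl).trans ?_
    exact add_le_add_right (cnt_mono (dep_le hs) _ _) _
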